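/- arXiv:0902.3783 — 5 statements merged into one kernel-verified Lean document; each statement's English description precedes it below -/
import Mathlib

section
/- The expected number of nontrivial returns of a Dyck path of length 2n equals (2n-2)/(n+2). -/
open Finset
open scoped Classical

/-- number of up-steps among the first `m` steps of `p` (`true` = up-step `(1,1)`). -/
def upCount {N : ℕ} (p : Fin N → Bool) (m : ℕ) : ℕ :=
  (Finset.univ.filter fun i : Fin N => (i : ℕ) < m ∧ p i = true).card

/-- number of down-steps among the first `m` steps of `p` (`false` = down-step `(1,-1)`). -/
def downCount {N : ℕ} (p : Fin N → Bool) (m : ℕ) : ℕ :=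
  (Finset.univ.filter fun i : Fin N => (i : ℕ) < m ∧ p i = false).card

/-- `p` is a Dyck path: it stays weakly above the x-axis and ends on the x-axis. -/
def IsDyck {N : ℕ} (p : Fin N → Bool) : Prop :=
  (∀ m : ℕ, downCount p m ≤ upCount p m) ∧ upCount p N = downCount p N

/-- Dyck paths of length `2n`. -/
noncomputable def dyckPaths (n : ℕ) : Finset (Fin (2 * n) → Bool) :=
  Finset.univ.filter fun p => IsDyck p

/-- number of nontrivial returns of `p`: interior points where the path meets the x-axis. -/
def returns {N : ℕ} (p : Fin N → Bool) : ℕ :=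
  ((Finset.Ioo 0 N).filter fun m => upCount p m = downCount p m).card

/-! A Dyck path of semilength `n` returning to the axis after `2j` steps is exactly the
concatenation of Dyck paths of semilengths `j` and `n - j`. Summing over all `i ∈ [0, 2n]`, the
number of pairs (path, return at `i`) is therefore `∑ j, C j * C (n - j) = C (n + 1)`. The two
endpoints account for `2 * C n` of these, so the interior returns total `C (n + 1) - 2 * C n`, and
`(n + 2) * C (n + 1) = 2 * (2n + 1) * C n` turns the mean into `(2n - 2) / (n + 2)`.

The splitting is done on Mathlib's `DyckWord`, where it is `take`/`drop` and concatenation `+`. -/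

theorem Fin.card_filter_lt_and_eq_eq_count_take {α : Type*} [DecidableEq α] {N : ℕ}
    (p : Fin N → α) (a : α) (m : ℕ) :
    #{i : Fin N | (i : ℕ) < m ∧ p i = a} = ((List.ofFn p).take m).count a := by
  induction N generalizing m with
  | zero => simp
  | succ N ih =>
    rw [Fin.card_filter_univ_succ', List.ofFn_succ]
    cases m with
    | zero => simp
    | succ m => simp [ih, List.count_cons, add_comm]

theorem card_filter_Ioo_add_two {P : ℕ → Prop} [DecidablePred P] {N : ℕ} (hN : 0 < N)
    (h0 : P 0) (hN' : P N) : #{i ∈ Ioo 0 N | P i} + 2 = #{i ∈ range (N + 1) | P i} := by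
  rw [Nat.range_succ_eq_Icc_zero, ← Ioc_insert_left hN.le, ← Ioo_insert_right hN,
    filter_insert, filter_insert, if_pos h0, if_pos hN', card_insert_of_notMem (by simp [hN.ne]),
    card_insert_of_notMem (by simp)]

theorem sum_range_two_mul_add_one_of_odd_eq_zero {M : Type*} [AddCommMonoid M] {f : ℕ → M}
    (n : ℕ) (hf : ∀ j < n, f (2 * j + 1) = 0) :
    ∑ i ∈ range (2 * n + 1), f i = ∑ j ∈ range (n + 1), f (2 * j) := by
  induction n with
  | zero => simp
  | succ n ih =>
    rw [sum_range_succ _ (n + 1), ← ih fun j hj => hf j (by omega),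
      show 2 * (n + 1) = 2 * n + 1 + 1 by ring, sum_range_succ f (2 * n + 1 + 1),
      sum_range_succ f (2 * n + 1), hf n n.lt_succ_self, add_zero]

theorem add_two_mul_catalan_succ (n : ℕ) :
    (n + 2) * catalan (n + 1) = 2 * (2 * n + 1) * catalan n := by
  apply Nat.eq_of_mul_eq_mul_left n.succ_pos
  calc (n + 1) * ((n + 2) * catalan (n + 1)) = (n + 1) * (n + 1).centralBinom := by
        rw [← succ_mul_catalan_eq_centralBinom]
    _ = 2 * (2 * n + 1) * n.centralBinom := Nat.succ_mul_centralBinom_succ n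
    _ = (n + 1) * (2 * (2 * n + 1) * catalan n) := by
        rw [← succ_mul_catalan_eq_centralBinom]; ring

theorem catalan_pos (n : ℕ) : 0 < catalan n :=
  Nat.pos_of_mul_pos_left ((succ_mul_catalan_eq_centralBinom n).symm ▸ n.centralBinom_pos)

open DyckStep

theorem DyckStep.count_U_add_count_D (l : List DyckStep) : l.count U + l.count D = l.length := by
  induction l with
  | nil => rfl
  | cons s l ih => cases s <;> simp [← ih] <;> omega

namespace DyckWord

variable {p q : DyckWord} {i : ℕ}

/-- Holds trivially for every `i ≥ p.toList.length`. -/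
def TouchesAt (p : DyckWord) (i : ℕ) : Prop :=
  (p.toList.take i).count U = (p.toList.take i).count D

@[simp]
theorem toList_add : (p + q).toList = p.toList ++ q.toList := rfl

theorem TouchesAt.even (h : p.TouchesAt i) (hi : i ≤ p.toList.length) : Even i := by
  have := DyckStep.count_U_add_count_D (p.toList.take i)
  rw [List.length_take_of_le hi] at this
  exact ⟨_, by rw [← this, h]⟩

theorem touchesAt_zero : p.TouchesAt 0 := by simp [TouchesAt]

theorem touchesAt_of_length_eq (hi : p.toList.length = i) : p.TouchesAt i := by
  simpa [TouchesAt, ← hi] using p.count_U_eq_count_D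

theorem touchesAt_add_of_length_eq (hi : p.toList.length = i) : (p + q).TouchesAt i := by
  simpa [TouchesAt, List.take_left' hi] using p.count_U_eq_count_D

theorem two_mul_semilength_take (h : p.TouchesAt i) (hi : i ≤ p.toList.length) :
    2 * (p.take i h).semilength = i := by
  rw [two_mul_semilength_eq_length]
  exact List.length_take_of_le hi

theorem take_add_drop (h : p.TouchesAt i) : p.take i h + p.drop i h = p :=
  DyckWord.ext (List.take_append_drop i p.toList)

theorem take_add (hi : p.toList.length = i) (h : (p + q).TouchesAt i) : (p + q).take i h = p :=
  DyckWord.ext (by simp [take, List.take_left' hi])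

theorem drop_add (hi : p.toList.length = i) (h : (p + q).TouchesAt i) : (p + q).drop i h = q :=
  DyckWord.ext (by simp [drop, List.drop_left' hi])

theorem card_touchesAt_two_mul {j k n : ℕ} (hjk : j + k = n) :
    #{w : {w : DyckWord // w.semilength = n} | w.1.TouchesAt (2 * j)} = catalan j * catalan k := by
  subst hjk
  rw [← card_dyckWord_semilength_eq_catalan, ← card_dyckWord_semilength_eq_catalan,
    ← Fintype.card_prod, ← card_univ]
  have hlen (w : {w : DyckWord // w.semilength = j + k}) : 2 * j ≤ w.1.toList.length := by
    rw [← two_mul_semilength_eq_length, w.2]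
    omega
  refine card_bij' (fun w hw => (⟨w.1.take (2 * j) (mem_filter.1 hw).2, ?_⟩,
      ⟨w.1.drop (2 * j) (mem_filter.1 hw).2, ?_⟩))
    (fun ab _ => ⟨ab.1.1 + ab.2.1, by simp [ab.1.2, ab.2.2]⟩) ?_ ?_ ?_ ?_
  · have := two_mul_semilength_take (mem_filter.1 hw).2 (hlen w)
    omega
  · have hsplit := congrArg semilength (take_add_drop (mem_filter.1 hw).2)
    have := two_mul_semilength_take (mem_filter.1 hw).2 (hlen w)
    rw [semilength_add, w.2] at hsplit
    omega
  · exact fun _ _ => mem_univ _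
  · intro ab _
    refine mem_filter.2 ⟨mem_univ _, touchesAt_add_of_length_eq ?_⟩
    rw [← two_mul_semilength_eq_length, ab.1.2]
  · exact fun w _ => Subtype.ext (take_add_drop _)
  · intro ab _
    have hi : ab.1.1.toList.length = 2 * j := by rw [← two_mul_semilength_eq_length, ab.1.2]
    exact Prod.ext (Subtype.ext (take_add hi (touchesAt_add_of_length_eq hi)))
      (Subtype.ext (drop_add hi (touchesAt_add_of_length_eq hi)))

theorem sum_card_touchesAt_eq_catalan_succ (n : ℕ) :
    ∑ w : {w : DyckWord // w.semilength = n}, #{i ∈ range (2 * n + 1) | w.1.TouchesAt i}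
      = catalan (n + 1) := by
  simp only [card_filter]
  rw [sum_comm, sum_range_two_mul_add_one_of_odd_eq_zero, catalan_succ,
    Fin.sum_univ_eq_sum_range (fun i => catalan i * catalan (n - i))]
  · refine sum_congr rfl fun j hj => ?_
    rw [← card_filter, card_touchesAt_two_mul (Nat.add_sub_cancel' (mem_range_succ_iff.1 hj))]
  · intro j hj
    rw [← card_filter, card_eq_zero, filter_eq_empty_iff]
    intro w _ hw
    refine Nat.not_even_two_mul_add_one j (hw.even ?_)
    rw [← two_mul_semilength_eq_length, w.2]
    omega

theorem sum_card_touchesAt_Ioo_add_two_mul_catalan {n : ℕ} (hn : 1 ≤ n) :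
    ∑ w : {w : DyckWord // w.semilength = n}, #{i ∈ Ioo 0 (2 * n) | w.1.TouchesAt i}
      + 2 * catalan n = catalan (n + 1) := by
  rw [← sum_card_touchesAt_eq_catalan_succ, ← card_dyckWord_semilength_eq_catalan,
    Fintype.card_eq_sum_ones, mul_sum, ← sum_add_distrib]
  refine sum_congr rfl fun w _ => card_filter_Ioo_add_two (by omega) touchesAt_zero
    (touchesAt_of_length_eq ?_)
  rw [← two_mul_semilength_eq_length, w.2]

end DyckWord

def DyckStep.ofBool (b : Bool) : DyckStep := cond b U D

theorem DyckStep.ofBool_injective : Function.Injective DyckStep.ofBool := by decide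

theorem DyckStep.ofBool_beq_U (s : DyckStep) : DyckStep.ofBool (s == U) = s := by
  cases s <;> rfl

section Paths

variable {N : ℕ} {p : Fin N → Bool}

theorem upCount_eq_count_take {m : ℕ} :
    upCount p m = (((List.ofFn p).map DyckStep.ofBool).take m).count U := by
  rw [← List.map_take]
  exact (Fin.card_filter_lt_and_eq_eq_count_take p true m).trans
    (List.count_map_of_injective _ _ DyckStep.ofBool_injective true).symm

theorem downCount_eq_count_take {m : ℕ} :
    downCount p m = (((List.ofFn p).map DyckStep.ofBool).take m).count D := by
  rw [← List.map_take]
  exact (Fin.card_filter_lt_and_eq_eq_count_take p false m).trans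
    (List.count_map_of_injective _ _ DyckStep.ofBool_injective false).symm

theorem isDyck_iff_map_ofFn :
    IsDyck p ↔ (∀ m, (((List.ofFn p).map DyckStep.ofBool).take m).count D
        ≤ (((List.ofFn p).map DyckStep.ofBool).take m).count U) ∧
      ((List.ofFn p).map DyckStep.ofBool).count U
        = ((List.ofFn p).map DyckStep.ofBool).count D := by
  have hN : ((List.ofFn p).map DyckStep.ofBool).take N = (List.ofFn p).map DyckStep.ofBool :=
    List.take_of_length_le (by simp)
  simp only [IsDyck, upCount_eq_count_take, downCount_eq_count_take, hN]

def IsDyck.toDyckWord (hp : IsDyck p) : DyckWord where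
  toList := (List.ofFn p).map DyckStep.ofBool
  count_U_eq_count_D := (isDyck_iff_map_ofFn.1 hp).2
  count_D_le_count_U := (isDyck_iff_map_ofFn.1 hp).1

theorem IsDyck.touchesAt_toDyckWord_iff (hp : IsDyck p) (m : ℕ) :
    hp.toDyckWord.TouchesAt m ↔ upCount p m = downCount p m := by
  rw [upCount_eq_count_take, downCount_eq_count_take]
  rfl

theorem isDyck_of_map_ofFn_eq {w : DyckWord} (h : (List.ofFn p).map DyckStep.ofBool = w.toList) :
    IsDyck p :=
  isDyck_iff_map_ofFn.2 (h ▸ ⟨w.count_D_le_count_U, w.count_U_eq_count_D⟩)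

end Paths

theorem IsDyck.semilength_toDyckWord {n : ℕ} {p : Fin (2 * n) → Bool} (hp : IsDyck p) :
    hp.toDyckWord.semilength = n := by
  have h := hp.toDyckWord.two_mul_semilength_eq_length
  rw [show hp.toDyckWord.toList.length = 2 * n by simp [IsDyck.toDyckWord]] at h
  omega

theorem sum_dyckPaths_eq_sum_dyckWord {M : Type*} [AddCommMonoid M] {n : ℕ}
    {g : (Fin (2 * n) → Bool) → M} {f : DyckWord → M}
    (hfg : ∀ p (hp : IsDyck p), g p = f hp.toDyckWord) :
    ∑ p ∈ dyckPaths n, g p = ∑ w : {w : DyckWord // w.semilength = n}, f w := by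
  refine sum_bij (fun p hp => ⟨(mem_filter.1 hp).2.toDyckWord, IsDyck.semilength_toDyckWord _⟩)
    (fun _ _ => mem_univ _) ?_ ?_ fun p hp => hfg p (mem_filter.1 hp).2
  · intro p _ q _ hpq
    exact List.ofFn_injective
      ((List.map_injective_iff.2 DyckStep.ofBool_injective) (congrArg (·.1.toList) hpq))
  · intro w _
    have hlen : w.1.toList.length = 2 * n := by
      rw [← DyckWord.two_mul_semilength_eq_length, w.2]
    let p : Fin (2 * n) → Bool := fun i => w.1.toList[i] == U
    have hp : (List.ofFn p).map DyckStep.ofBool = w.1.toList :=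
      List.ext_getElem (by simp [hlen]) fun i _ _ => by simp [p, DyckStep.ofBool_beq_U]
    exact ⟨p, mem_filter.2 ⟨mem_univ _, isDyck_of_map_ofFn_eq hp⟩, Subtype.ext (DyckWord.ext hp)⟩

theorem card_dyckPaths (n : ℕ) : #(dyckPaths n) = catalan n := by
  rw [card_eq_sum_ones, sum_dyckPaths_eq_sum_dyckWord (f := fun _ => 1) fun _ _ => rfl,
    ← Fintype.card_eq_sum_ones, DyckWord.card_dyckWord_semilength_eq_catalan]

theorem sum_returns_add_two_mul_catalan {n : ℕ} (hn : 1 ≤ n) :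
    ∑ p ∈ dyckPaths n, returns p + 2 * catalan n = catalan (n + 1) := by
  rw [sum_dyckPaths_eq_sum_dyckWord (g := returns)
    (f := fun w => #{i ∈ Ioo 0 (2 * n) | w.TouchesAt i})
    fun p hp => congrArg card (filter_congr fun m _ => (hp.touchesAt_toDyckWord_iff m).symm)]
  exact DyckWord.sum_card_touchesAt_Ioo_add_two_mul_catalan hn

/-- The expected number of nontrivial returns of a uniformly random Dyck path of length `2n`
equals `(2n-2)/(n+2)`. -/
theorem expected_nontrivial_returns_dyck (n : ℕ) (hn : 1 ≤ n) :
    (∑ p ∈ dyckPaths n, (returns p : ℚ)) / ((dyckPaths n).card : ℚ)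
      = (2 * (n : ℚ) - 2) / ((n : ℚ) + 2) := by
  have hsum : ∑ p ∈ dyckPaths n, (returns p : ℚ) = catalan (n + 1) - 2 * catalan n := by
    rw [← sum_returns_add_two_mul_catalan hn]
    push_cast
    ring
  have hrec : ((n : ℚ) + 2) * catalan (n + 1) = 2 * (2 * n + 1) * catalan n := by
    exact_mod_cast add_two_mul_catalan_succ n
  have hpos : (0 : ℚ) < catalan n := by exact_mod_cast catalan_pos n
  rw [hsum, card_dyckPaths, div_eq_div_iff hpos.ne' (by positivity)]
  linear_combination hrec
end

section
/- The number of Dyck paths of length 2n with exactly j nontrivial returns equals ((j+1)/(2n-j-1)) * binom(2n-j-1, n). -/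
open Finset
open scoped Classical

/-!
A prefix of a path that stays weakly above the axis is recorded by its final height `h` and by the
number `k` of times it touches the axis after the start, the endpoint included. Appending the last
step shows that these numbers of prefixes of length `N` satisfy the recursion of
`firstPassageCount (N - k) (k + h)`, the number of walks of length `N - k` that start at height
`k + h` and first reach `0` at their last step. A Dyck path of length `2n ≥ 2` with `j` nontrivial
returns touches the axis `j + 1` times, and the hitting-time identity
`(2m + s) * firstPassageCount (2m + s) s = s * choose (2m + s) m`, which follows from the same
recursion by Pascal-type identities, gives the formula with `s = j + 1`, `m = n - j - 1`.
-/

def firstPassageCount : ℕ → ℕ → ℕ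
  | 0, s => if s = 0 then 1 else 0
  | _ + 1, 0 => 0
  | L + 1, s + 1 => firstPassageCount L s + firstPassageCount L (s + 2)

theorem firstPassageCount_eq_zero_of_lt {L s : ℕ} (h : L < s) : firstPassageCount L s = 0 := by
  induction L generalizing s with
  | zero => obtain ⟨s, rfl⟩ := Nat.exists_eq_succ_of_ne_zero h.ne'; rfl
  | succ L ih =>
    obtain ⟨s, rfl⟩ := Nat.exists_eq_succ_of_ne_zero (by omega : s ≠ 0)
    rw [firstPassageCount, ih (by omega), ih (by omega)]

theorem firstPassageCount_self (s : ℕ) : firstPassageCount s s = 1 := by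
  induction s with
  | zero => rfl
  | succ s ih => rw [firstPassageCount, ih, firstPassageCount_eq_zero_of_lt (by omega)]

theorem firstPassageCount_mul (m s : ℕ) :
    (2 * m + s) * firstPassageCount (2 * m + s) s = s * (2 * m + s).choose m := by
  induction m generalizing s with
  | zero => simp [firstPassageCount_self]
  | succ m ihm =>
    induction s with
    | zero => rw [Nat.zero_mul, Nat.mul_succ]; rfl
    | succ s ihs =>
      obtain ⟨M, hM⟩ : ∃ M, M = 2 * m + s + 2 := ⟨_, rfl⟩
      have ha := ihs
      have hb := ihm (s + 2)
      rw [show 2 * (m + 1) + s = M by omega] at ha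
      rw [show 2 * m + (s + 2) = M by omega] at hb
      have h1 : M.choose (m + 1) * (m + 1) = M.choose m * (m + s + 2) := by
        rw [Nat.choose_succ_right_eq]; congr 1; omega
      have h2 := Nat.add_one_mul_choose_eq M m
      rw [show 2 * (m + 1) + (s + 1) = M + 1 by omega, firstPassageCount]
      -- after multiplying by `M * (m + 1)`, `h1` and `h2` express every binomial through `M.choose m`
      apply Nat.eq_of_mul_eq_mul_left (show 0 < M * (m + 1) by rw [hM]; positivity)
      zify at ha hb h1 h2 hM ⊢
      linear_combination (↑m + 1) * (↑M + 1) * ha + (↑m + 1) * (↑M + 1) * hb + ↑s * (↑M + 1) * h1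
        + ↑M * (↑s + 1) * h2 - (↑s + 1) * (↑M + 1) * ↑(M.choose m) * hM

theorem card_eq_sum_card_snoc {α : Type*} [Fintype α] [DecidableEq α] {N : ℕ}
    (s : Finset (Fin (N + 1) → α)) :
    #s = ∑ a, #{q : Fin N → α | Fin.snoc q a ∈ s} := by
  have hsum := Fintype.sum_equiv (Fin.snocEquiv fun _ => α)
    (fun x => if Fin.snoc x.2 x.1 ∈ s then 1 else 0) (fun p => if p ∈ s then 1 else 0) (fun _ => rfl)
  simp only [card_filter, Fintype.sum_prod_type] at hsum ⊢
  rw [hsum, Finset.sum_boole, filter_univ_mem, Nat.cast_id]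

theorem card_filter_lt_snoc {α : Type*} [DecidableEq α] {N : ℕ} (q : Fin N → α) (b c : α)
    (m : ℕ) :
    #{i : Fin (N + 1) | (i : ℕ) < m ∧ (Fin.snoc q b : Fin (N + 1) → α) i = c}
      = #{i : Fin N | (i : ℕ) < m ∧ q i = c} + if N < m ∧ b = c then 1 else 0 := by
  simp only [card_filter, Fin.sum_univ_castSucc, Fin.snoc_castSucc, Fin.snoc_last,
    Fin.val_castSucc, Fin.val_last]

section Paths

variable {N : ℕ}

def height (p : Fin N → Bool) (m : ℕ) : ℤ := upCount p m - downCount p m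

def touches (p : Fin N → Bool) : ℕ := #{m ∈ Ioc 0 N | height p m = 0}

noncomputable def meanders (N h k : ℕ) : Finset (Fin N → Bool) :=
  {p | (∀ m, 0 ≤ height p m) ∧ height p N = h ∧ touches p = k}

theorem height_of_le {m : ℕ} (p : Fin N → Bool) (h : N ≤ m) : height p m = height p N := by
  have (c : Bool) :
      #{i : Fin N | (i : ℕ) < m ∧ p i = c} = #{i : Fin N | (i : ℕ) < N ∧ p i = c} := by
    congr 1; ext i; simp [i.isLt.trans_le h]
  simp only [height, upCount, downCount, this]

theorem height_snoc (q : Fin N → Bool) (b : Bool) (m : ℕ) :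
    height (Fin.snoc q b : Fin (N + 1) → Bool) m
      = if N < m then height q N + (if b then 1 else -1) else height q m := by
  by_cases h : N < m
  · rw [if_pos h, ← height_of_le q h.le]
    simp only [height, upCount, downCount, card_filter_lt_snoc, h, true_and]
    cases b <;> simp only [Bool.false_eq_true, Bool.true_eq_false, ↓reduceIte, add_zero,
      Nat.cast_add, Nat.cast_one] <;> ring
  · simp [height, upCount, downCount, card_filter_lt_snoc, h]

theorem touches_snoc (q : Fin N → Bool) (b : Bool) :
    touches (Fin.snoc q b : Fin (N + 1) → Bool)
      = touches q + if height (Fin.snoc q b : Fin (N + 1) → Bool) (N + 1) = 0 then 1 else 0 := by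
  have hfilter : {m ∈ Ioc 0 N | height (Fin.snoc q b : Fin (N + 1) → Bool) m = 0}
      = {m ∈ Ioc 0 N | height q m = 0} :=
    filter_congr fun m hm => by rw [height_snoc, if_neg (mem_Ioc.1 hm).2.not_gt]
  rw [touches, ← insert_Ioc_right_eq_Ioc_add_one N.zero_le, filter_insert, hfilter]
  split_ifs
  · rw [card_insert_of_notMem (by simp), touches]
  · rw [touches, add_zero]

theorem forall_height_snoc_nonneg (q : Fin N → Bool) (b : Bool) :
    (∀ m, 0 ≤ height (Fin.snoc q b : Fin (N + 1) → Bool) m) ↔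
      (∀ m, 0 ≤ height q m) ∧ 0 ≤ height q N + if b then 1 else -1 := by
  simp only [height_snoc]
  constructor
  · intro h
    refine ⟨fun m => ?_, by simpa using h (N + 1)⟩
    rcases le_or_gt m N with hm | hm
    · simpa [hm.not_gt] using h m
    · simpa [height_of_le q hm.le] using h N
  · rintro ⟨h, hN⟩ m
    by_cases hm : N < m
    · rwa [if_pos hm]
    · rw [if_neg hm]
      exact h m

theorem snoc_mem_meanders {h k : ℕ} (q : Fin N → Bool) (b : Bool) :
    (Fin.snoc q b : Fin (N + 1) → Bool) ∈ meanders (N + 1) h k ↔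
      (∀ m, 0 ≤ height q m) ∧ height q N + (if b then 1 else -1) = h ∧
        touches q + (if h = 0 then 1 else 0) = k := by
  have hlast : height (Fin.snoc q b : Fin (N + 1) → Bool) (N + 1)
      = height q N + if b then 1 else -1 := by
    simp [height_snoc]
  simp only [meanders, mem_filter, mem_univ, true_and, forall_height_snoc_nonneg, touches_snoc,
    hlast]
  constructor
  · rintro ⟨⟨hq, -⟩, hh, hk⟩
    exact ⟨hq, hh, by simpa [hh] using hk⟩
  · rintro ⟨hq, hh, hk⟩
    exact ⟨⟨hq, hh ▸ h.cast_nonneg⟩, hh, by simpa [hh] using hk⟩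

theorem snoc_mem_meanders_iff {h h' k k' : ℕ} (q : Fin N → Bool) (b : Bool)
    (hh : (h' : ℤ) + (if b then 1 else -1) = h) (hk : k' + (if h = 0 then 1 else 0) = k) :
    (Fin.snoc q b : Fin (N + 1) → Bool) ∈ meanders (N + 1) h k ↔ q ∈ meanders N h' k' := by
  rw [snoc_mem_meanders, meanders, mem_filter_univ, ← hh, ← hk]
  simp only [add_left_inj]

theorem snoc_true_notMem_meanders_zero {k : ℕ} (q : Fin N → Bool) :
    (Fin.snoc q true : Fin (N + 1) → Bool) ∉ meanders (N + 1) 0 k := by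
  rw [snoc_mem_meanders, if_pos rfl, Nat.cast_zero]
  rintro ⟨hq, hN, -⟩
  linarith [hq N]

theorem isDyck_iff (p : Fin N → Bool) :
    IsDyck p ↔ (∀ m, 0 ≤ height p m) ∧ height p N = 0 := by
  simp [IsDyck, height, sub_eq_zero]

theorem touches_eq_returns_add_one {p : Fin N → Bool} (hN : 0 < N) (hp : height p N = 0) :
    touches p = returns p + 1 := by
  rw [touches, returns, ← Finset.Ioo_insert_right hN, filter_insert, if_pos hp,
    card_insert_of_notMem (by simp)]
  simp [height, sub_eq_zero]

end Paths

theorem card_meanders_zero (h k : ℕ) : #(meanders 0 h k) = if k + h = 0 then 1 else 0 := by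
  simp [meanders, touches, height, upCount, downCount, apply_ite card, eq_comm (a := (0 : ℤ)),
    eq_comm (a := 0), and_comm]

theorem meanders_succ_zero_zero (N : ℕ) : meanders (N + 1) 0 0 = ∅ := by
  rw [← card_eq_zero, card_eq_sum_card_snoc, Fintype.sum_bool]
  simp [snoc_mem_meanders]

theorem card_meanders_succ_zero_succ (N k : ℕ) :
    #(meanders (N + 1) 0 (k + 1)) = #(meanders N 1 k) := by
  rw [card_eq_sum_card_snoc, Fintype.sum_bool,
    card_eq_zero.2 (filter_eq_empty_iff.2 fun q _ => snoc_true_notMem_meanders_zero q), zero_add]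
  congr 1; ext q; rw [mem_filter_univ]
  exact snoc_mem_meanders_iff q false (by simp) (by simp)

theorem card_meanders_succ_succ (N h k : ℕ) :
    #(meanders (N + 1) (h + 1) k) = #(meanders N h k) + #(meanders N (h + 2) k) := by
  rw [card_eq_sum_card_snoc, Fintype.sum_bool]
  congr 2 <;> ext q <;> rw [mem_filter_univ]
  · exact snoc_mem_meanders_iff q true (by simp) (by simp)
  · exact snoc_mem_meanders_iff q false (by push_cast; ring) (by simp)

theorem card_meanders (N h k : ℕ) : #(meanders N h k) = firstPassageCount (N - k) (k + h) := by
  induction N generalizing h k with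
  | zero => rw [card_meanders_zero, Nat.zero_sub]; rfl
  | succ N ih =>
    rcases h with _ | h
    · rcases k with _ | k
      · rw [meanders_succ_zero_zero, card_empty]; rfl
      · rw [card_meanders_succ_zero_succ, ih, Nat.add_sub_add_right]
    · rw [card_meanders_succ_succ, ih, ih]
      rcases le_or_gt k N with hk | hk
      · rw [Nat.sub_add_comm hk]; rfl
      · rw [Nat.sub_eq_zero_of_le hk, Nat.sub_eq_zero_of_le hk.le,
          firstPassageCount_eq_zero_of_lt (show 0 < k + h by omega),
          firstPassageCount_eq_zero_of_lt (show 0 < k + (h + 2) by omega),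
          firstPassageCount_eq_zero_of_lt (show 0 < k + (h + 1) by omega)]

theorem filter_returns_dyckPaths {n : ℕ} (hn : 0 < n) (j : ℕ) :
    (dyckPaths n).filter (fun p => returns p = j) = meanders (2 * n) 0 (j + 1) := by
  ext p
  simp only [dyckPaths, meanders, mem_filter, mem_univ, true_and, isDyck_iff, Nat.cast_zero]
  constructor
  · rintro ⟨⟨hnn, hp⟩, rfl⟩
    exact ⟨hnn, hp, touches_eq_returns_add_one (by omega) hp⟩
  · rintro ⟨hnn, hp, hk⟩
    rw [touches_eq_returns_add_one (by omega) hp] at hk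
    exact ⟨⟨hnn, hp⟩, by omega⟩

theorem dyck_paths_with_j_returns_general (n j : ℕ) (hn : 1 ≤ n) :
    ((((dyckPaths n).filter fun p => returns p = j)).card : ℚ)
      = (((j : ℚ) + 1) / (2 * (n : ℚ) - (j : ℚ) - 1)) * ((2 * n - j - 1).choose n : ℚ) := by
  rw [filter_returns_dyckPaths hn, card_meanders, add_zero]
  rcases lt_or_ge j n with hj | hj
  · obtain ⟨m, rfl⟩ := Nat.exists_eq_add_of_lt hj
    have hden : 2 * ((j + m + 1 : ℕ) : ℚ) - j - 1 = ((2 * m + (j + 1) : ℕ) : ℚ) := by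
      push_cast; ring
    rw [show 2 * (j + m + 1) - (j + 1) = 2 * m + (j + 1) by omega,
      show 2 * (j + m + 1) - j - 1 = 2 * m + (j + 1) by omega,
      ← Nat.choose_symm_of_eq_add (show 2 * m + (j + 1) = m + (j + m + 1) by omega),
      hden, div_mul_eq_mul_div, eq_div_iff (by positivity), mul_comm]
    exact_mod_cast firstPassageCount_mul m (j + 1)
  · rw [firstPassageCount_eq_zero_of_lt (by omega), Nat.choose_eq_zero_of_lt (by omega)]
    simp

/-- The number of Dyck paths of length `2n` with exactly `j` nontrivial returns equals
`((j+1)/(2n-j-1)) * binom(2n-j-1, n)`. -/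
theorem dyck_paths_with_j_returns (n j : ℕ) (hn : 1 ≤ n) (hj : j ≤ n - 1) :
    ((((dyckPaths n).filter fun p => returns p = j)).card : ℚ)
      = (((j : ℚ) + 1) / (2 * (n : ℚ) - (j : ℚ) - 1)) * ((2 * n - j - 1).choose n : ℚ) :=
  dyck_paths_with_j_returns_general n j hn
end

section
/- For n >= 1, the sum over j >= 0 of ((j+1)/(2n-j-1)) * binom(2n-j-1, n) equals the Catalan number C_n = (1/(n+1)) binom(2n, n). -/
/-!
With `B m = C(m, n) - C(m, n + 1)`, the summand for `j` is `B m - B (m - 1)` where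
`m = 2n - j - 1`: clearing the denominator `m`, this is Pascal's rule together with
`(n + 1) C(m, n + 1) = (m - n) C(m, n)`. The sum therefore telescopes to
`B (2n - 1) - B (n - 1) = B (2n - 1)`, and `B (2n - 1) = B (2n) = C(2n, n) / (n + 1)`,
the first by the symmetry `C(2n - 1, n - 1) = C(2n - 1, n)`, the second by the same ratio identity.
-/

open Finset

section CommRing

variable {R : Type*} [CommRing R]

theorem Nat.cast_choose_succ_right_mul (m k : ℕ) :
    (m.choose (k + 1) : R) * (k + 1) = m.choose k * (m - k) := by
  rcases le_or_gt k m with hkm | hmk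
  · have h := congrArg (Nat.cast : ℕ → R) (Nat.choose_succ_right_eq m k)
    push_cast [Nat.cast_sub hkm] at h
    exact h
  · simp [Nat.choose_eq_zero_of_lt hmk, Nat.choose_eq_zero_of_lt (hmk.trans (Nat.lt_succ_self k))]

variable (R) in
/-- By the reflection principle, `ballot ℤ n m` counts the lattice paths of `m` up and down
steps, `n` of them up, that never go below their starting level. -/
def ballot (n m : ℕ) : R :=
  m.choose n - m.choose (n + 1)

theorem ballot_eq_zero_of_lt {n m : ℕ} (h : m < n) : ballot R n m = 0 := by
  simp [ballot, Nat.choose_eq_zero_of_lt h, Nat.choose_eq_zero_of_lt (h.trans (Nat.lt_succ_self n))]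

theorem succ_mul_ballot_succ_sub_ballot (n k : ℕ) :
    ((k : R) + 1) * (ballot R n (k + 1) - ballot R n k)
      = (2 * n - (k + 1)) * (k + 1).choose n := by
  have pascal : ((k + 1).choose (n + 1) : R) = k.choose n + k.choose (n + 1) := by
    rw [Nat.choose_succ_succ']
    push_cast
    rfl
  have absorb : ((k : R) + 1) * k.choose n = (k + 1).choose (n + 1) * (n + 1) := by
    simpa using congrArg (Nat.cast : ℕ → R) (Nat.add_one_mul_choose_eq k n)
  have ratio := Nat.cast_choose_succ_right_mul (R := R) (k + 1) n
  push_cast at ratio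
  unfold ballot
  linear_combination (-(k : R) - 1) * pascal - 2 * absorb - 2 * ratio

theorem ballot_two_mul (n : ℕ) : ballot R n (2 * n) = catalan n := by
  suffices h : ballot ℤ n (2 * n) = catalan n by
    simpa [ballot] using congrArg (Int.cast : ℤ → R) h
  have ratio := Nat.cast_choose_succ_right_mul (R := ℤ) (2 * n) n
  have central : ((n : ℤ) + 1) * catalan n = (2 * n).choose n := by
    exact_mod_cast (succ_mul_catalan_eq_centralBinom n).trans (Nat.centralBinom_eq_two_mul_choose n)
  refine mul_left_cancel₀ (show (n : ℤ) + 1 ≠ 0 by positivity) ?_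
  unfold ballot
  push_cast at ratio
  linear_combination -ratio - central

theorem ballot_two_mul_sub_one {n : ℕ} (hn : 1 ≤ n) : ballot R n (2 * n - 1) = catalan n := by
  obtain ⟨k, rfl⟩ := Nat.exists_eq_add_of_le' hn
  rw [← ballot_two_mul, show 2 * (k + 1) - 1 = 2 * k + 1 by omega,
    show 2 * (k + 1) = 2 * k + 1 + 1 by ring, ballot, ballot,
    Nat.choose_succ_succ' (2 * k + 1) k, Nat.choose_succ_succ' (2 * k + 1) (k + 1),
    Nat.choose_symm_half]
  push_cast
  ring

end CommRing

section Field

variable {K : Type*} [Field K] [CharZero K]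

theorem cast_catalan_eq_choose_div (n : ℕ) :
    (catalan n : K) = (2 * n).choose n / (n + 1) := by
  rw [catalan_eq_centralBinom_div, Nat.cast_div (Nat.succ_dvd_centralBinom n)
    (by exact_mod_cast n.succ_ne_zero), Nat.centralBinom_eq_two_mul_choose]
  push_cast
  rfl

theorem sum_range_div_mul_choose_eq_ballot {n : ℕ} (hn : 1 ≤ n) :
    ∑ j ∈ range n, ((j : K) + 1) / (2 * n - j - 1) * (2 * n - j - 1).choose n
      = ballot K n (2 * n - 1) := by
  have telescope := sum_range_sub' (fun j ↦ ballot K n (2 * n - 1 - j)) n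
  rw [show 2 * n - 1 - n < n by omega |> ballot_eq_zero_of_lt, sub_zero, Nat.sub_zero] at telescope
  rw [← telescope]
  refine sum_congr rfl fun j hj ↦ ?_
  obtain ⟨k, hk⟩ : ∃ k, j + k + 2 = 2 * n := ⟨2 * n - j - 2, by rw [mem_range] at hj; omega⟩
  have hk' : (2 * n : K) = j + k + 2 := by exact_mod_cast hk.symm
  have step := succ_mul_ballot_succ_sub_ballot (R := K) n k
  rw [hk', show (j : K) + k + 2 - (k + 1) = j + 1 by ring] at step
  rw [hk', show (j : K) + k + 2 - j - 1 = k + 1 by ring, show 2 * n - j - 1 = k + 1 by omega,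
    show 2 * n - 1 - j = k + 1 by omega, show 2 * n - 1 - (j + 1) = k by omega,
    div_mul_eq_mul_div, div_eq_iff (Nat.cast_add_one_ne_zero k), ← step]
  ring

end Field

/-- For `n ≥ 1`, the sum over `j` of `((j+1)/(2n-j-1)) * binom(2n-j-1, n)` (the sum
effectively runs over `0 ≤ j ≤ n-1`) equals the Catalan number `C_n = (1/(n+1)) binom(2n,n)`. -/
theorem sum_returns_counts_eq_catalan (n : ℕ) (hn : 1 ≤ n) :
    ∑ j ∈ Finset.range n,
        (((j : ℚ) + 1) / (2 * (n : ℚ) - (j : ℚ) - 1)) * ((2 * n - j - 1).choose n : ℚ)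
      = (catalan n : ℚ) ∧ (catalan n : ℚ) = ((2 * n).choose n : ℚ) / ((n : ℚ) + 1) :=
  ⟨(sum_range_div_mul_choose_eq_ballot hn).trans (ballot_two_mul_sub_one hn),
    cast_catalan_eq_choose_div n⟩
end

section
/- Continuity theorem for discrete limit laws: let Omega be a subset of the open unit disc of the complex plane with an accumulation point in the open unit disc. Let P_n(u) = sum_{k>=0} p_{n,k} u^k and q(u) = sum_{k>=0} q_k u^k be power series with nonnegative coefficients, each P_n a probability generating function (coefficients summing to 1), analytic on the closed unit disc. If lim_{n->infinity} P_n(u) = q(u) for every u in Omega, then for every fixed k, lim_{n->infinity} p_{n,k} = q_k and lim_{n->infinity} sum_{j<=k} p_{n,j} = sum_{j<=k} q_j. -/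
/-!
The coefficient sequences `p n` lie in the compact cube `[0, 1]^ℕ`, so it suffices to show that
every cluster point `r` of `(p n)` equals `q`. Along an ultrafilter converging to `r`, dominated
convergence (with the bound `‖u‖ ^ k`) shows that the generating function of `r` agrees with that
of `q` on `Ω`. Since `Ω` accumulates inside the unit disc, where both series are analytic, the
identity theorem gives equal power series and hence `r = q`.
-/

open Filter FormalMultilinearSeries

open scoped Topology ENNReal

lemma summable_mul_pow_of_norm_le {b : ℕ → ℂ} {C : ℝ} (hb : ∀ k, ‖b k‖ ≤ C) {u : ℂ}
    (hu : ‖u‖ < 1) : Summable fun k => b k * u ^ k := by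
  refine Summable.of_norm_bounded ((summable_geometric_of_lt_one (norm_nonneg u) hu).mul_left C)
    fun k => ?_
  rw [norm_mul, norm_pow]
  exact mul_le_mul_of_nonneg_right (hb k) (by positivity)

lemma tendsto_tsum_mul_pow_of_tendsto {ι : Type*} {l : Filter ι} {a : ι → ℕ → ℂ}
    {b : ℕ → ℂ} (hab : ∀ k, Tendsto (a · k) l (𝓝 (b k))) {C : ℝ}
    (ha : ∀ᶠ i in l, ∀ k, ‖a i k‖ ≤ C) {u : ℂ} (hu : ‖u‖ < 1) :
    Tendsto (fun i => ∑' k, a i k * u ^ k) l (𝓝 (∑' k, b k * u ^ k)) := by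
  refine tendsto_tsum_of_dominated_convergence
    ((summable_geometric_of_lt_one (norm_nonneg u) hu).mul_left C)
    (fun k => (hab k).mul_const _) (ha.mono fun i hi k => ?_)
  rw [norm_mul, norm_pow]
  exact mul_le_mul_of_nonneg_right (hi k) (by positivity)

lemma le_radius_ofScalars_of_summable {c : ℕ → ℂ} {R : ℝ≥0∞}
    (hc : ∀ u ∈ Metric.eball (0 : ℂ) R, Summable fun k => c k * u ^ k) :
    R ≤ (ofScalars ℂ c).radius := by
  refine ENNReal.le_of_forall_nnreal_lt fun r hr =>
    (ofScalars ℂ c).le_radius_of_tendsto (l := 0) ?_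
  have hmem : ((r : ℝ) : ℂ) ∈ Metric.eball (0 : ℂ) R := by
    simpa [Metric.mem_eball, enorm, Complex.nnnorm_real] using hr
  convert (hc _ hmem).tendsto_atTop_zero.norm using 2 <;> simp

lemma hasFPowerSeriesOnBall_tsum_mul_pow {c : ℕ → ℂ} {R : ℝ≥0∞} (hR : 0 < R)
    (hc : ∀ u ∈ Metric.eball (0 : ℂ) R, Summable fun k => c k * u ^ k) :
    HasFPowerSeriesOnBall (fun u => ∑' k, c k * u ^ k) (ofScalars ℂ c) 0 R := by
  have h := ((ofScalars ℂ c).hasFPowerSeriesOnBall (hR.trans_le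
    (le_radius_ofScalars_of_summable hc))).mono hR (le_radius_ofScalars_of_summable hc)
  have hsum : (ofScalars ℂ c).sum = fun u => ∑' k, c k * u ^ k := ofScalarsSum_eq_tsum c
  rwa [hsum] at h

lemma coeff_eq_of_frequently_tsum_mul_pow_eq {c d : ℕ → ℂ} {R : ℝ≥0∞}
    (hc : ∀ u ∈ Metric.eball (0 : ℂ) R, Summable fun k => c k * u ^ k)
    (hd : ∀ u ∈ Metric.eball (0 : ℂ) R, Summable fun k => d k * u ^ k)
    {z : ℂ} (hz : z ∈ Metric.eball (0 : ℂ) R)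
    (hfreq : ∃ᶠ w in 𝓝[≠] z, ∑' k, c k * w ^ k = ∑' k, d k * w ^ k) :
    c = d := by
  have hR : 0 < R := pos_of_gt hz
  have hfc := hasFPowerSeriesOnBall_tsum_mul_pow hR hc
  have hfd := hasFPowerSeriesOnBall_tsum_mul_pow hR hd
  have heqOn := hfc.analyticOnNhd.eqOn_of_preconnected_of_frequently_eq hfd.analyticOnNhd
    (convex_eball 0 R).isPreconnected (by simpa using hz) hfreq
  have hev := heqOn.eventuallyEq_of_mem (Metric.eball_mem_nhds 0 hR)
  exact ofScalars_series_injective ℂ ℂ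
    (hfc.hasFPowerSeriesAt.eq_formalMultilinearSeries (hfd.hasFPowerSeriesAt.congr hev.symm))

theorem continuity_theorem_discrete_limit_laws_general
    (Ω : Set ℂ) (hΩ : Ω ⊆ Metric.ball 0 1)
    (hacc : ∃ z ∈ Metric.ball (0 : ℂ) 1, AccPt z (Filter.principal Ω))
    (p : ℕ → ℕ → ℝ) (hp0 : ∀ n k, 0 ≤ p n k) (hp1 : ∀ n, HasSum (p n) 1)
    (q : ℕ → ℝ)
    (hqsum : ∀ u ∈ Metric.ball (0 : ℂ) 1, Summable fun k => (q k : ℂ) * u ^ k)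
    (hconv : ∀ u ∈ Ω,
      Tendsto (fun n => ∑' k, (p n k : ℂ) * u ^ k) atTop
        (nhds (∑' k, (q k : ℂ) * u ^ k))) :
    ∀ k : ℕ,
      Tendsto (fun n => p n k) atTop (nhds (q k)) ∧
      Tendsto (fun n => ∑ j ∈ Finset.range (k + 1), p n j) atTop
        (nhds (∑ j ∈ Finset.range (k + 1), q j)) := by
  obtain ⟨z, hz, hzacc⟩ := hacc
  have hdisc : Metric.eball (0 : ℂ) 1 = Metric.ball 0 1 := by
    rw [← ENNReal.ofReal_one, Metric.eball_ofReal]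
  set K : Set (ℕ → ℝ) := Set.univ.pi fun _ => Set.Icc 0 1
  have hnorm_le : ∀ s ∈ K, ∀ k, ‖(s k : ℂ)‖ ≤ 1 := fun s hs k => by
    rw [Complex.norm_real, Real.norm_of_nonneg (hs k trivial).1]
    exact (hs k trivial).2
  have hpK : ∀ n, p n ∈ K :=
    fun n k _ => ⟨hp0 n k, le_hasSum (hp1 n) k fun j _ => hp0 n j⟩
  have hlim : Tendsto p atTop (𝓝 q) := by
    refine (isCompact_univ_pi fun _ => isCompact_Icc).tendsto_nhds_of_unique_mapClusterPt
      (Eventually.of_forall hpK) fun r hrK hr => ?_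
    obtain ⟨𝒰, h𝒰, hp𝒰⟩ := mapClusterPt_iff_ultrafilter.1 hr
    have hagree : ∀ u ∈ Ω, ∑' k, (r k : ℂ) * u ^ k = ∑' k, (q k : ℂ) * u ^ k := fun u hu =>
      tendsto_nhds_unique
        (tendsto_tsum_mul_pow_of_tendsto
          (fun k => (Complex.continuous_ofReal.tendsto _).comp (tendsto_pi_nhds.1 hp𝒰 k))
          (Eventually.of_forall fun n => hnorm_le _ (hpK n)) (mem_ball_zero_iff.1 (hΩ hu)))
        ((hconv u hu).mono_left h𝒰)
    have hrq := coeff_eq_of_frequently_tsum_mul_pow_eq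
      (fun u hu =>
        summable_mul_pow_of_norm_le (hnorm_le r hrK) (mem_ball_zero_iff.1 (hdisc ▸ hu)))
      (hdisc ▸ hqsum) (hdisc ▸ hz)
      ((accPt_iff_frequently_nhdsNE.1 hzacc).mono hagree)
    exact funext fun k => Complex.ofReal_injective (congrFun hrq k)
  intro k
  exact ⟨tendsto_pi_nhds.1 hlim k, tendsto_finsetSum _ fun j _ => tendsto_pi_nhds.1 hlim j⟩

/-- Continuity theorem for discrete limit laws: let `Ω` be a subset of the open unit disc
of `ℂ` with an accumulation point in the open unit disc. Let `Pₙ(u) = ∑_k p_{n,k} u^k`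
and `q(u) = ∑_k q_k u^k` be power series with nonnegative coefficients, each `Pₙ` a
probability generating function (coefficients summing to `1`) analytic on the closed unit
disc. If `Pₙ(u) → q(u)` for every `u ∈ Ω`, then for every fixed `k`,
`p_{n,k} → q_k` and `∑_{j≤k} p_{n,j} → ∑_{j≤k} q_j` as `n → ∞`. -/
theorem continuity_theorem_discrete_limit_laws
    (Ω : Set ℂ) (hΩ : Ω ⊆ Metric.ball 0 1)
    (hacc : ∃ z ∈ Metric.ball (0 : ℂ) 1, AccPt z (Filter.principal Ω))
    (p : ℕ → ℕ → ℝ) (hp0 : ∀ n k, 0 ≤ p n k) (hp1 : ∀ n, HasSum (p n) 1)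
    (hPanal : ∀ n, ∀ u ∈ Metric.closedBall (0 : ℂ) 1,
      Summable fun k => (p n k : ℂ) * u ^ k)
    (q : ℕ → ℝ) (hq0 : ∀ k, 0 ≤ q k)
    (hqsum : ∀ u ∈ Metric.ball (0 : ℂ) 1, Summable fun k => (q k : ℂ) * u ^ k)
    (hconv : ∀ u ∈ Ω,
      Tendsto (fun n => ∑' k, (p n k : ℂ) * u ^ k) atTop
        (nhds (∑' k, (q k : ℂ) * u ^ k))) :
    ∀ k : ℕ,
      Tendsto (fun n => p n k) atTop (nhds (q k)) ∧
      Tendsto (fun n => ∑ j ∈ Finset.range (k + 1), p n j) atTop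
        (nhds (∑ j ∈ Finset.range (k + 1), q j)) :=
  continuity_theorem_discrete_limit_laws_general Ω hΩ hacc p hp0 hp1 q hqsum hconv
end

section
/- For generalized Dyck paths from (0,0) to ((t+1)n, 0) with up-steps (1,1) and down-steps (1,-t) staying weakly above the x-axis, the number of such paths is the Fuss-Catalan number (1/(tn+1)) binom((t+1)n, n), and the expected number of nontrivial returns equals (2n-2)/(tn+2). -/
open Finset
open scoped Classical

/-- Generalized `t`-Dyck paths from `(0,0)` to `((t+1)n, 0)`: paths with up-steps `(1,1)`
and down-steps `(1,-t)` staying weakly above the x-axis and ending on it. -/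
noncomputable def genDyckPaths (t n : ℕ) : Finset (Fin ((t + 1) * n) → Bool) :=
  Finset.univ.filter fun p =>
    (∀ m : ℕ, t * downCount p m ≤ upCount p m) ∧
    upCount p ((t + 1) * n) = t * downCount p ((t + 1) * n)

/-- number of nontrivial returns of `p`: interior lattice points where the path meets
the x-axis. -/
def genReturns (t : ℕ) {N : ℕ} (p : Fin N → Bool) : ℕ :=
  ((Finset.Ioo 0 N).filter fun m => upCount p m = t * downCount p m).card

/-!
Let `height` be the prefix sums of the step weights `+1` (up) and `-t` (down). A word of length
`L` with `n` down-steps ends at height `r = L - (t+1)n`; when `r > 0`, the cycle lemma says that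
exactly `r` of its `L` cyclic rotations keep every nonempty prefix at positive height. Double
counting pairs (word, rotation) gives `L · #strict = r · C(L, n)`, and deleting the forced initial
up-step turns strict paths ending at height `h + 1` into nonnegative paths ending at height `h`.
For `h = 0` this is the Fuss–Catalan count `D n = C((t+1)n, n) / (tn+1)`, for `h = 1` it is
`2 C((t+1)n+2, n) / ((t+1)n+2)`.

Cutting a Dyck path at a return `(t+1)k` leaves two Dyck paths, so the returns of all Dyck paths
number `∑_{0<k<n} D k · D (n-k)`. Cutting a nonnegative path ending at height `1` at its last zero
leaves a Dyck path and a strict path, so the full convolution `∑_{k=0}^{n} D k · D (n-k)` is the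
`h = 1` count. It exceeds the number of returns by the two end terms `2 D n`, so the returns
number `(2n-2) D n / (tn+2)`.
-/

theorem Fin.card_eq_card_mul_card_of_append_mem_iff {α : Type*} {A B : ℕ}
    {s : Finset (Fin (A + B) → α)} {S : Finset (Fin A → α)} {T : Finset (Fin B → α)}
    (h : ∀ p q, Fin.append p q ∈ s ↔ p ∈ S ∧ q ∈ T) : #s = #S * #T := by
  rw [← card_product]
  exact (card_equiv (Fin.appendEquiv A B) fun x => mem_product.trans (h x.1 x.2).symm).symm

theorem Finset.sum_eq_sum_mul_of_not_dvd {M : Type*} [AddCommMonoid M] {d : ℕ} (hd : 0 < d)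
    {s u : Finset ℕ} (hsu : ∀ k, d * k ∈ s ↔ k ∈ u) {f : ℕ → M}
    (hf : ∀ m ∈ s, ¬ d ∣ m → f m = 0) :
    ∑ m ∈ s, f m = ∑ k ∈ u, f (d * k) := by
  rw [← sum_image fun a _ b _ h => Nat.eq_of_mul_eq_mul_left hd h]
  refine (sum_subset (fun m hm => ?_) fun m hm hm' => hf m hm fun ⟨k, hk⟩ => hm' ?_).symm
  · obtain ⟨k, hk, rfl⟩ := mem_image.1 hm
    exact (hsu k).2 hk
  · subst hk
    exact mem_image_of_mem _ ((hsu k).1 hm)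

namespace GenDyck

section CycleLemma

variable {f : ℕ → ℤ} {L : ℕ} {r : ℤ}

lemma lt_of_forall_lt_add (hL : 0 < L) (hr : 0 ≤ r) (hper : ∀ i, f (i + L) = f i + r) {k : ℕ}
    (hk : ∀ m, 0 < m → m ≤ L → f k < f (k + m)) {i : ℕ} (hki : k < i) : f k < f i := by
  induction i using Nat.strong_induction_on with
  | _ i ih =>
    rcases le_or_gt i (k + L) with hi | hi
    · simpa [Nat.add_sub_cancel' hki.le] using hk (i - k) (by lia) (by lia)
    · have h₁ := ih (i - L) (by lia) (by lia)
      have h₂ := hper (i - L)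
      rw [Nat.sub_add_cancel (by lia)] at h₂
      lia

lemma le_of_forall_lt_le (hL : 0 < L) (hr : 0 ≤ r) (hper : ∀ i, f (i + L) = f i + r) {M : ℤ}
    (hM : ∀ i < L, M ≤ f i) (i : ℕ) : M ≤ f i := by
  induction i using Nat.strong_induction_on with
  | _ i ih =>
    rcases lt_or_ge i L with hi | hi
    · exact hM i hi
    · have h₁ := ih (i - L) (by lia)
      have h₂ := hper (i - L)
      rw [Nat.sub_add_cancel hi] at h₂
      lia

theorem cycle_lemma (hL : 0 < L) (hr : 0 < r) (hper : ∀ i, f (i + L) = f i + r)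
    (hstep : ∀ i, f (i + 1) ≤ f i + 1) :
    #{k ∈ range L | ∀ m, 0 < m → m ≤ L → f k < f (k + m)} = r.toNat := by
  obtain ⟨i₀, hi₀, hmin⟩ := (range L).exists_min_image f (nonempty_range_iff.2 hL.ne')
  have hlow : ∀ i, f i₀ ≤ f i :=
    le_of_forall_lt_le hL hr.le hper fun i hi => hmin i (mem_range.2 hi)
  have hhigh (i : ℕ) (hi : L ≤ i) : f i₀ + r ≤ f i := by
    have := hper (i - L)
    rw [Nat.sub_add_cancel hi] at this
    linarith [hlow (i - L)]
  -- `f` maps the good positions bijectively onto the levels `[f i₀, f i₀ + r)`: a good `k` is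
  -- the last visit of `f` to its level.
  rw [show r.toNat = (f i₀ + r - f i₀).toNat by simp, ← Int.card_Ico]
  refine card_nbij f (fun k hk => ?_) (fun k₁ hk₁ k₂ hk₂ hf => ?_) (fun v hv => ?_)
  · obtain ⟨hkL, hk⟩ := mem_filter.1 hk
    have := lt_of_forall_lt_add hL hr.le hper hk (show k < i₀ + L by simp at hkL; lia)
    rw [hper] at this
    exact mem_Ico.2 ⟨hlow k, this⟩
  · obtain ⟨-, hk₁⟩ := mem_filter.1 hk₁
    obtain ⟨-, hk₂⟩ := mem_filter.1 hk₂
    rcases lt_trichotomy k₁ k₂ with h | h | h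
    · exact absurd hf (lt_of_forall_lt_add hL hr.le hper hk₁ h).ne
    · exact h
    · exact absurd hf (lt_of_forall_lt_add hL hr.le hper hk₂ h).ne'
  · obtain ⟨hv₁, hv₂⟩ := mem_Ico.1 (mem_coe.1 hv)
    obtain ⟨k, hk, hkmax⟩ := ({i ∈ range L | f i ≤ v} : Finset ℕ).exists_max_image id
      ⟨i₀, mem_filter.2 ⟨hi₀, hv₁⟩⟩
    obtain ⟨hkL, hkv⟩ := mem_filter.1 hk
    have hafter (i : ℕ) (hi : k < i) : v < f i := by
      by_contra! hfi
      rcases lt_or_ge i L with hiL | hiL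
      · exact absurd (hkmax i (mem_filter.2 ⟨mem_range.2 hiL, hfi⟩)) (by simpa using hi)
      · linarith [hhigh i hiL]
    have hfk : f k = v := le_antisymm hkv (by linarith [hstep k, hafter (k + 1) k.lt_succ_self])
    exact ⟨k, mem_filter.2 ⟨hkL, fun m hm _ => hfk ▸ hafter (k + m) (by lia)⟩, hfk⟩

end CycleLemma

def stepHeight (t : ℕ) (b : Bool) : ℤ := if b then 1 else -t

def height (t : ℕ) {N : ℕ} (p : Fin N → Bool) (m : ℕ) : ℤ :=
  ∑ i : Fin N, if (i : ℕ) < m then stepHeight t (p i) else 0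

variable {t : ℕ}

lemma stepHeight_le_one (b : Bool) : stepHeight t b ≤ 1 := by
  cases b <;> simp [stepHeight]

lemma eq_true_of_stepHeight_pos {b : Bool} (h : 0 < stepHeight t b) : b = true := by
  cases b <;> simp [stepHeight] at h ⊢
  lia

section Height

variable {N : ℕ} (p : Fin N → Bool)

@[simp] lemma height_zero : height t p 0 = 0 := by
  simp [height]

lemma height_of_le {m : ℕ} (hm : N ≤ m) : height t p m = height t p N := by
  refine sum_congr rfl fun i _ => ?_
  simp [i.isLt, i.isLt.trans_le hm]

lemma height_eq_upCount_sub_downCount (m : ℕ) :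
    height t p m = upCount p m - t * downCount p m := by
  simp only [height, upCount, downCount, card_filter, Nat.cast_sum, mul_sum, ← sum_sub_distrib]
  refine sum_congr rfl fun i _ => ?_
  cases p i <;> by_cases (i : ℕ) < m <;> simp [stepHeight, *]

lemma upCount_add_downCount {m : ℕ} (hm : m ≤ N) : upCount p m + downCount p m = m := by
  rw [upCount, downCount, ← card_union_of_disjoint (disjoint_filter.2 fun i _ h₁ h₂ => by simp_all),
    ← filter_or]
  have : ∀ i : Fin N, ((i : ℕ) < m ∧ p i = true ∨ (i : ℕ) < m ∧ p i = false) ↔ (i : ℕ) < m := by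
    intro i; cases p i <;> simp
  simp only [this, Fin.card_filter_val_lt]
  lia

lemma height_eq_zero_iff (m : ℕ) :
    height t p m = 0 ↔ upCount p m = t * downCount p m := by
  rw [height_eq_upCount_sub_downCount, sub_eq_zero]
  exact_mod_cast Iff.rfl

lemma dvd_of_height_eq_zero {m : ℕ} (hm : m ≤ N) (h : height t p m = 0) : t + 1 ∣ m :=
  ⟨downCount p m, by have := upCount_add_downCount p hm; rw [height_eq_zero_iff] at h; lia⟩

lemma height_self : height t p N = N - (t + 1) * downCount p N := by
  have : (upCount p N + downCount p N : ℤ) = N := by exact_mod_cast upCount_add_downCount p le_rfl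
  rw [height_eq_upCount_sub_downCount]
  linear_combination this

end Height

noncomputable def weakPaths (t L h : ℕ) : Finset (Fin L → Bool) :=
  {p | (∀ m ≤ L, 0 ≤ height t p m) ∧ height t p L = h}

noncomputable def strictPaths (t L h : ℕ) : Finset (Fin L → Bool) :=
  {p | (∀ m, 0 < m → m ≤ L → 0 < height t p m) ∧ height t p L = h}

lemma mem_strictPaths_iff {L h : ℕ} {p : Fin L → Bool} :
    p ∈ strictPaths t L h ↔ p ∈ weakPaths t L h ∧ ∀ m, 0 < m → m ≤ L → height t p m ≠ 0 := by
  simp only [strictPaths, weakPaths, mem_filter, mem_univ, true_and]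
  constructor
  · rintro ⟨hpos, hend⟩
    refine ⟨⟨fun m hm => ?_, hend⟩, fun m hm hmL => (hpos m hm hmL).ne'⟩
    rcases m.eq_zero_or_pos with rfl | hm0
    · simp
    · exact (hpos m hm0 hm).le
  · rintro ⟨⟨hnn, hend⟩, hne⟩
    exact ⟨fun m hm hmL => (hnn m hmL).lt_of_ne' (hne m hm hmL), hend⟩

lemma genDyckPaths_eq_weakPaths (t n : ℕ) : genDyckPaths t n = weakPaths t ((t + 1) * n) 0 := by
  ext p
  have hnonneg (m : ℕ) : t * downCount p m ≤ upCount p m ↔ 0 ≤ height t p m := by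
    rw [height_eq_upCount_sub_downCount, sub_nonneg]
    exact_mod_cast Iff.rfl
  simp only [genDyckPaths, weakPaths, mem_filter, mem_univ, true_and, hnonneg,
    ← height_eq_zero_iff, Nat.cast_zero]
  refine and_congr_left fun _ => ⟨fun h m _ => h m, fun h m => ?_⟩
  rcases le_total m ((t + 1) * n) with hm | hm
  · exact h m hm
  · rw [height_of_le p hm]
    exact h _ le_rfl

lemma genReturns_eq {N : ℕ} (p : Fin N → Bool) :
    genReturns t p = #{m ∈ Ioo 0 N | height t p m = 0} := by
  simp only [genReturns, height_eq_zero_iff]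

section Cons

lemma height_cons_succ {N : ℕ} (b : Bool) (p : Fin N → Bool) (m : ℕ) :
    height t (Fin.cons b p : Fin (N + 1) → Bool) (m + 1) = stepHeight t b + height t p m := by
  simp [height, Fin.sum_univ_succ]

variable {L h : ℕ}

lemma cons_true_mem_strictPaths_iff (p : Fin L → Bool) :
    (Fin.cons true p : Fin (L + 1) → Bool) ∈ strictPaths t (L + 1) (h + 1) ↔
      p ∈ weakPaths t L h := by
  simp only [strictPaths, weakPaths, mem_filter, mem_univ, true_and, height_cons_succ]
  refine and_congr ⟨fun hpos m hm => ?_, fun hnn m hm0 hm => ?_⟩ (by simp [stepHeight, add_comm])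
  · have := hpos (m + 1) m.succ_pos (by lia)
    rw [height_cons_succ] at this
    simp only [stepHeight, if_true] at this
    lia
  · obtain ⟨m, rfl⟩ := Nat.exists_eq_add_of_lt hm0
    rw [zero_add, height_cons_succ]
    simp only [stepHeight, if_true]
    linarith [hnn m (by lia)]

lemma head_eq_true_of_mem_strictPaths {q : Fin (L + 1) → Bool} (hq : q ∈ strictPaths t (L + 1) h) :
    q 0 = true := by
  have h1 := (mem_filter.1 hq).2.1 1 one_pos (by lia)
  rw [← Fin.cons_self_tail q, height_cons_succ, height_zero, add_zero] at h1
  exact eq_true_of_stepHeight_pos h1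

lemma card_strictPaths_succ : #(strictPaths t (L + 1) (h + 1)) = #(weakPaths t L h) := by
  refine (card_nbij' (fun p => Fin.cons true p) Fin.tail (fun p hp => ?_) (fun q hq => ?_)
    (fun p _ => Fin.tail_cons _ _) (fun q hq => ?_)).symm
  · exact (cons_true_mem_strictPaths_iff p).2 hp
  · rw [mem_coe] at hq ⊢
    rw [← cons_true_mem_strictPaths_iff, ← head_eq_true_of_mem_strictPaths hq, Fin.cons_self_tail]
    exact hq
  · show Fin.cons true (Fin.tail q) = q
    rw [← head_eq_true_of_mem_strictPaths (mem_coe.1 hq), Fin.cons_self_tail]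

end Cons

section Append

variable {A B h : ℕ} (p : Fin A → Bool) (q : Fin B → Bool)

lemma height_append_of_le {m : ℕ} (hm : m ≤ A) : height t (Fin.append p q) m = height t p m := by
  have : ∀ i : Fin B, ¬ A + (i : ℕ) < m := fun i => by lia
  simp [height, Fin.sum_univ_add, this]

lemma height_append_add (m : ℕ) :
    height t (Fin.append p q) (A + m) = height t p A + height t q m := by
  have : ∀ i : Fin A, (i : ℕ) < A + m := fun i => by lia
  simp [height, Fin.sum_univ_add, this]

lemma append_mem_weakPaths_iff (hp : height t p A = 0) :
    Fin.append p q ∈ weakPaths t (A + B) h ↔ p ∈ weakPaths t A 0 ∧ q ∈ weakPaths t B h := by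
  have hright (m : ℕ) : height t (Fin.append p q) (A + m) = height t q m := by
    rw [height_append_add, hp, zero_add]
  simp only [weakPaths, mem_filter, mem_univ, true_and, hright, Nat.cast_zero]
  constructor
  · rintro ⟨hnn, hend⟩
    refine ⟨⟨fun m hm => ?_, hp⟩, fun m hm => ?_, hend⟩
    · rw [← height_append_of_le p q hm]
      exact hnn m (by lia)
    · rw [← hright]
      exact hnn _ (by lia)
  · rintro ⟨⟨hp', -⟩, hq', hend⟩
    refine ⟨fun m hm => ?_, hend⟩
    rcases le_or_gt m A with hmA | hAm
    · rw [height_append_of_le p q hmA]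
      exact hp' m hmA
    · obtain ⟨j, rfl⟩ := Nat.exists_eq_add_of_le hAm.le
      rw [hright]
      exact hq' j (by lia)

lemma append_mem_weakPaths_and_ne_zero_iff (hp : height t p A = 0) :
    (Fin.append p q ∈ weakPaths t (A + B) h ∧
        ∀ j, A < j → j ≤ A + B → height t (Fin.append p q) j ≠ 0) ↔
      p ∈ weakPaths t A 0 ∧ q ∈ strictPaths t B h := by
  rw [append_mem_weakPaths_iff p q hp, mem_strictPaths_iff, and_assoc]
  refine and_congr_right fun _ => and_congr_right fun _ =>
    ⟨fun hne m hm hmB => ?_, fun hne j hj hjB => ?_⟩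
  · simpa [height_append_add, hp] using hne (A + m) (by lia) (by lia)
  · obtain ⟨m, rfl⟩ := Nat.exists_eq_add_of_le hj.le
    simpa [height_append_add, hp] using hne m (by lia) (by lia)

end Append

variable (t) in
lemma card_filter_height_eq_zero (A B h : ℕ) :
    #{p ∈ weakPaths t (A + B) h | height t p A = 0} = #(weakPaths t A 0) * #(weakPaths t B h) := by
  refine Fin.card_eq_card_mul_card_of_append_mem_iff fun p q => ?_
  rw [mem_filter, height_append_of_le p q le_rfl]
  by_cases hp : height t p A = 0
  · simp [hp, append_mem_weakPaths_iff p q hp]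
  · simp [hp, weakPaths]

variable (t) in
lemma card_filter_height_eq_zero_and_ne_zero (A B h : ℕ) :
    #{p ∈ weakPaths t (A + B) h |
        height t p A = 0 ∧ ∀ j, A < j → j ≤ A + B → height t p j ≠ 0} =
      #(weakPaths t A 0) * #(strictPaths t B h) := by
  refine Fin.card_eq_card_mul_card_of_append_mem_iff fun p q => ?_
  rw [mem_filter, height_append_of_le p q le_rfl]
  by_cases hp : height t p A = 0
  · rw [← append_mem_weakPaths_and_ne_zero_iff p q hp]
    simp [hp]
  · simp [hp, weakPaths]

section Rotation

open Fin.NatCast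

variable {L : ℕ} [NeZero L]

def rotate {α : Type*} (k : ℕ) (s : Fin L → α) : Fin L → α := fun i => s (i + (k : Fin L))

def periodicHeight (t : ℕ) (s : Fin L → Bool) (m : ℕ) : ℤ :=
  ∑ i ∈ range m, stepHeight t (s (i : Fin L))

variable (s : Fin L → Bool)

lemma periodicHeight_succ (m : ℕ) :
    periodicHeight t s (m + 1) = periodicHeight t s m + stepHeight t (s (m : Fin L)) :=
  sum_range_succ _ _

lemma periodicHeight_add_self (m : ℕ) :
    periodicHeight t s (m + L) = periodicHeight t s m + periodicHeight t s L := by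
  induction m with
  | zero => simp [periodicHeight]
  | succ m ih =>
    rw [Nat.add_right_comm, periodicHeight_succ, ih, periodicHeight_succ, Nat.cast_add,
      Fin.natCast_self, add_zero]
    ring

lemma height_eq_periodicHeight {m : ℕ} (hm : m ≤ L) : height t s m = periodicHeight t s m := by
  have := Fin.sum_univ_eq_sum_range (fun i => if i < m then stepHeight t (s (i : Fin L)) else 0) L
  simp only [Fin.cast_val_eq_self] at this
  rw [height, this, ← sum_filter, periodicHeight]
  congr 1
  ext i
  simp only [mem_filter, mem_range]
  lia

lemma periodicHeight_rotate (k m : ℕ) :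
    periodicHeight t (rotate k s) m = periodicHeight t s (k + m) - periodicHeight t s k := by
  simp [periodicHeight, rotate, sum_range_add, add_comm]

lemma rotate_mem_strictPaths_iff (k h : ℕ) :
    rotate k s ∈ strictPaths t L h ↔
      (∀ m, 0 < m → m ≤ L → periodicHeight t s k < periodicHeight t s (k + m)) ∧
        height t s L = h := by
  simp only [strictPaths, mem_filter, mem_univ, true_and, height_eq_periodicHeight _ le_rfl,
    periodicHeight_rotate, periodicHeight_add_self]
  refine and_congr (forall_congr' fun m => imp_congr_right fun _ => forall_congr' fun hm => ?_)
    (by rw [add_sub_cancel_left])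
  rw [height_eq_periodicHeight _ hm, periodicHeight_rotate, sub_pos]

lemma card_filter_rotate_mem_strictPaths {h : ℕ} (hh : 0 < h) (hs : height t s L = h) :
    #{k ∈ range L | rotate k s ∈ strictPaths t L h} = h := by
  simp only [rotate_mem_strictPaths_iff, hs, and_true]
  have hL : 0 < periodicHeight t s L := by
    rw [← height_eq_periodicHeight s le_rfl, hs]; exact_mod_cast hh
  rw [cycle_lemma (NeZero.pos L) hL (periodicHeight_add_self s)
    fun i => by rw [periodicHeight_succ]; linarith [stepHeight_le_one (t := t) (s (i : Fin L))],
    ← height_eq_periodicHeight s le_rfl, hs, Int.toNat_natCast]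

lemma card_rotate_mem {α : Type*} [Fintype α] (k : ℕ) (S : Finset (Fin L → α)) :
    #{s | rotate k s ∈ S} = #S := by
  have hinv (s : Fin L → α) : rotate k (fun i => s (i - (k : Fin L))) = s :=
    funext fun i => by simp [rotate]
  exact card_nbij' (rotate k) (fun s i => s (i - (k : Fin L))) (fun s hs => by simpa using hs)
    (fun s hs => by simpa [hinv] using hs) (fun s _ => funext fun i => by simp [rotate])
    (fun s _ => hinv s)

end Rotation

theorem card_strictPaths_mul {L : ℕ} [NeZero L] {h : ℕ} (hh : 0 < h) :
    #(strictPaths t L h) * L = h * #{s : Fin L → Bool | height t s L = h} := by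
  set T : Finset (Fin L → Bool) := {s | height t s L = h}
  have hfib (k : ℕ) : #{s ∈ T | rotate k s ∈ strictPaths t L h} = #(strictPaths t L h) := by
    refine (congrArg card ?_).trans (card_rotate_mem k _)
    ext s
    simp only [T, mem_filter, mem_univ, true_and, and_iff_right_iff_imp]
    exact fun hs => ((rotate_mem_strictPaths_iff s k h).1 hs).2
  have key := sum_card_bipartiteAbove_eq_sum_card_bipartiteBelow (s := T) (t := range L)
    (r := fun s k => rotate k s ∈ strictPaths t L h)
  simp only [bipartiteAbove, bipartiteBelow, hfib] at key
  rw [sum_congr rfl fun s hs => card_filter_rotate_mem_strictPaths s hh (mem_filter.1 hs).2] at key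
  simp only [sum_const, card_range, smul_eq_mul] at key
  linarith

lemma card_filter_downCount_eq_choose (N n : ℕ) :
    #{s : Fin N → Bool | downCount s N = n} = N.choose n := by
  rw [show N.choose n = #(powersetCard n (univ : Finset (Fin N))) by simp]
  have hdown (s : Fin N → Bool) : downCount s N = #{i | s i = false} := by simp [downCount]
  refine card_nbij' (fun s => ({i | s i = false} : Finset (Fin N))) (fun S i => decide (i ∉ S))
    (fun s hs => ?_) (fun S hS => ?_) (fun s _ => funext fun i => by simp) (fun S _ => by ext; simp)
  · simpa [hdown] using hs
  · simp_all

lemma card_height_eq_choose (t n h : ℕ) :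
    #{s : Fin ((t + 1) * n + h) → Bool | height t s ((t + 1) * n + h) = h} =
      ((t + 1) * n + h).choose n := by
  rw [← card_filter_downCount_eq_choose]
  congr 1
  ext s
  simp only [mem_filter, mem_univ, true_and, height_self]
  constructor <;> intro hs
  · have : ((t + 1) * downCount s ((t + 1) * n + h) : ℤ) = (t + 1) * n := by
      push_cast at hs ⊢
      linarith
    exact Nat.eq_of_mul_eq_mul_left t.succ_pos (by exact_mod_cast this)
  · rw [hs]; push_cast; ring

theorem card_weakPaths_mul (t n h : ℕ) :
    #(weakPaths t ((t + 1) * n + h) h) * ((t + 1) * n + h + 1) =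
      (h + 1) * ((t + 1) * n + h + 1).choose n := by
  rw [← card_strictPaths_succ, card_strictPaths_mul h.succ_pos]
  exact congrArg _ (card_height_eq_choose t n (h + 1))

theorem sum_card_filter_height_eq_zero (t n : ℕ) :
    ∑ p ∈ weakPaths t ((t + 1) * n) 0, #{m ∈ Ioo 0 ((t + 1) * n) | height t p m = 0} =
      ∑ k ∈ Ioo 0 n, #(weakPaths t ((t + 1) * k) 0) * #(weakPaths t ((t + 1) * (n - k)) 0) := by
  have swap := sum_card_bipartiteAbove_eq_sum_card_bipartiteBelow
    (s := weakPaths t ((t + 1) * n) 0) (t := Ioo 0 ((t + 1) * n)) (r := fun p m => height t p m = 0)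
  simp only [bipartiteAbove, bipartiteBelow] at swap
  rw [swap, sum_eq_sum_mul_of_not_dvd t.succ_pos (fun k => ?_) fun m hm hdvd => ?_]
  · refine sum_congr rfl fun k hk => ?_
    rw [show (t + 1) * n = (t + 1) * k + (t + 1) * (n - k) by
      rw [← mul_add, Nat.add_sub_cancel' (mem_Ioo.1 hk).2.le], card_filter_height_eq_zero]
  · simp [mem_Ioo]
  · refine card_eq_zero.2 (filter_eq_empty_iff.2 fun p _ h => hdvd ?_)
    exact dvd_of_height_eq_zero p (mem_Ioo.1 hm).2.le h

theorem card_weakPaths_one_eq_sum (t n : ℕ) :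
    #(weakPaths t ((t + 1) * n + 1) 1) =
      ∑ k ∈ range (n + 1),
        #(weakPaths t ((t + 1) * k) 0) * #(weakPaths t ((t + 1) * (n - k)) 0) := by
  let lastZero (p : Fin ((t + 1) * n + 1) → Bool) : ℕ :=
    Nat.findGreatest (fun m => height t p m = 0) ((t + 1) * n + 1)
  have hmaps : ∀ p ∈ weakPaths t ((t + 1) * n + 1) 1, lastZero p ∈ range ((t + 1) * n + 1) := by
    intro p hp
    have hzero : height t p (lastZero p) = 0 :=
      Nat.findGreatest_spec (P := fun m => height t p m = 0) (Nat.zero_le _) (height_zero p)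
    refine mem_range.2 ((Nat.findGreatest_le _).lt_of_ne fun hL => ?_)
    rw [show lastZero p = _ from hL, (mem_filter.1 hp).2.2] at hzero
    exact one_ne_zero hzero
  have hfib (m : ℕ) (hm : m ∈ range ((t + 1) * n + 1)) (p : Fin ((t + 1) * n + 1) → Bool) :
      lastZero p = m ↔
        height t p m = 0 ∧ ∀ j, m < j → j ≤ (t + 1) * n + 1 → height t p j ≠ 0 := by
    rw [Nat.findGreatest_eq_iff]
    rcases m.eq_zero_or_pos with rfl | hm0
    · simp
    · simp [(mem_range.1 hm).le, hm0.ne']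
  rw [card_eq_sum_card_fiberwise hmaps,
    sum_congr rfl fun m hm => congrArg card (filter_congr fun p _ => hfib m hm p),
    sum_eq_sum_mul_of_not_dvd t.succ_pos (fun k => ?_) fun m hm hdvd => ?_]
  · refine sum_congr rfl fun k hk => ?_
    rw [show (t + 1) * n + 1 = (t + 1) * k + ((t + 1) * (n - k) + 1) by
      rw [← add_assoc, ← mul_add, Nat.add_sub_cancel' (Nat.lt_succ_iff.1 (mem_range.1 hk))],
      card_filter_height_eq_zero_and_ne_zero, card_strictPaths_succ]
  · simp
  · refine card_eq_zero.2 (filter_eq_empty_iff.2 fun p _ h => hdvd ?_)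
    exact dvd_of_height_eq_zero p (mem_range.1 hm).le h.1

lemma card_weakPaths_zero : #(weakPaths t 0 0) = 1 := by
  simp [weakPaths, height]

theorem sum_genReturns_add_two_mul_card {n : ℕ} (hn : 1 ≤ n) :
    ∑ p ∈ genDyckPaths t n, genReturns t p + 2 * #(genDyckPaths t n) =
      #(weakPaths t ((t + 1) * n + 1) 1) := by
  rw [genDyckPaths_eq_weakPaths, card_weakPaths_one_eq_sum, sum_range_succ, range_eq_Ico,
    sum_eq_sum_Ico_succ_bot (Nat.zero_lt_of_lt hn), Ico_add_one_left_eq_Ioo, Nat.sub_zero,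
    Nat.sub_self, mul_zero, card_weakPaths_zero]
  simp only [genReturns_eq, sum_card_filter_height_eq_zero]
  ring

theorem card_genDyckPaths_mul (t n : ℕ) :
    #(genDyckPaths t n) * (t * n + 1) = ((t + 1) * n).choose n := by
  have hD := card_weakPaths_mul t n 0
  have hC := Nat.choose_mul_succ_eq ((t + 1) * n) n
  rw [show (t + 1) * n + 1 - n = t * n + 1 by lia] at hC
  rw [add_zero, zero_add, one_mul] at hD
  rw [genDyckPaths_eq_weakPaths]
  apply Nat.eq_of_mul_eq_mul_right (show 0 < (t + 1) * n + 1 by positivity)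
  qify at hD hC ⊢
  linear_combination (t * n + 1 : ℚ) * hD - hC

theorem card_weakPaths_one_mul (t n : ℕ) :
    #(weakPaths t ((t + 1) * n + 1) 1) * (t * n + 2) =
      2 * ((t + 1) * n + 1) * #(genDyckPaths t n) := by
  have hW := card_weakPaths_mul t n 1
  have hD := card_weakPaths_mul t n 0
  have hC := Nat.choose_mul_succ_eq ((t + 1) * n + 1) n
  rw [show (t + 1) * n + 1 + 1 - n = t * n + 2 by lia] at hC
  rw [add_zero, zero_add, one_mul] at hD
  rw [genDyckPaths_eq_weakPaths]
  apply Nat.eq_of_mul_eq_mul_right (show 0 < (t + 1) * n + 2 by positivity)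
  qify at hW hD hC ⊢
  linear_combination (t * n + 2 : ℚ) * hW - 2 * hC - 2 * ((t + 1) * n + 2 : ℚ) * hD

end GenDyck

theorem genDyck_count_and_expected_returns_general (t n : ℕ) (hn : 1 ≤ n) :
    ((genDyckPaths t n).card : ℚ)
        = (((t + 1) * n).choose n : ℚ) / ((t : ℚ) * (n : ℚ) + 1)
    ∧ (∑ p ∈ genDyckPaths t n, (genReturns t p : ℚ)) / ((genDyckPaths t n).card : ℚ)
        = (2 * (n : ℚ) - 2) / ((t : ℚ) * (n : ℚ) + 2) := by
  have hD := GenDyck.card_genDyckPaths_mul t n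
  have hR := GenDyck.sum_genReturns_add_two_mul_card (t := t) hn
  have hW := GenDyck.card_weakPaths_one_mul t n
  have hpos : 0 < #(genDyckPaths t n) :=
    Nat.pos_of_mul_pos_right (hD ▸ Nat.choose_pos (Nat.le_mul_of_pos_left n t.succ_pos))
  qify at hD hR hW
  refine ⟨by rw [eq_div_iff (by positivity)]; exact hD, ?_⟩
  rw [div_eq_div_iff (by positivity) (by positivity)]
  linear_combination ((t : ℚ) * n + 2) * hR + hW

/-- The number of generalized `t`-Dyck paths from `(0,0)` to `((t+1)n,0)` is the
Fuss–Catalan number `(1/(tn+1)) binom((t+1)n, n)`, and the expected number of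
nontrivial returns of a uniformly random such path equals `(2n-2)/(tn+2)`. -/
theorem genDyck_count_and_expected_returns (t n : ℕ) (ht : 1 ≤ t) (hn : 1 ≤ n) :
    ((genDyckPaths t n).card : ℚ)
        = (((t + 1) * n).choose n : ℚ) / ((t : ℚ) * (n : ℚ) + 1)
    ∧ (∑ p ∈ genDyckPaths t n, (genReturns t p : ℚ)) / ((genDyckPaths t n).card : ℚ)
        = (2 * (n : ℚ) - 2) / ((t : ℚ) * (n : ℚ) + 2) :=
  genDyck_count_and_expected_returns_general t n hn
end
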